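/- For every constant β ≥ 1, the redundancy of S^β satisfies R_S^β(x_{1:n}) ≥ CL_w(𝒜) − m·ln m + Σ_{j∈𝒜} (1/2)·ln n_j − m·(1 − ln ln 2) − (1 − ln√(2π)). -/

import Mathlib

open Finset Real Filter
open Nat
set_option linter.unusedSectionVars false
set_option linter.unusedVariables false

variable {𝒳 : Type*} [Fintype 𝒳] [DecidableEq 𝒳]

/-- `n_i^t`: number of occurrences of symbol `i` among the first `t` symbols
`x 0, …, x (t-1)` (the paper's `x_1, …, x_t`). -/
def cnt (x : ℕ → 𝒳) (i : 𝒳) (t : ℕ) : ℕ :=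
  ((Finset.range t).filter fun τ => x τ = i).card

/-- `𝒜_t`: the set of symbols occurring among the first `t` symbols. -/
def alph (x : ℕ → 𝒳) (t : ℕ) : Finset 𝒳 := (Finset.range t).image x

/-- Predictive probability `S^{β⃗}(x_{t+1} = i | x_{1:t})`. -/
noncomputable def Spred (x : ℕ → 𝒳) (w : ℕ → 𝒳 → ℝ) (β : ℕ → ℝ) (t : ℕ) (i : 𝒳) : ℝ :=
  if 0 < cnt x i t then (cnt x i t : ℝ) / (t + β t) else β t * w t i / (t + β t)

/-- Joint probability `S^{β⃗}(x_{1:n})`. -/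
noncomputable def Sjoint (x : ℕ → 𝒳) (w : ℕ → 𝒳 → ℝ) (β : ℕ → ℝ) (n : ℕ) : ℝ :=
  ∏ t ∈ Finset.range n, Spred x w β t (x t)

/-- `𝒩`: the set of times `t ∈ {0,…,n-1}` at which a new symbol occurs. -/
def newTimes (x : ℕ → 𝒳) (n : ℕ) : Finset ℕ :=
  (Finset.range n).filter fun t => x t ∉ alph x t

/-- `CL_w(𝒜)`: code length of the used alphabet. -/
noncomputable def CLw (x : ℕ → 𝒳) (w : ℕ → 𝒳 → ℝ) (n : ℕ) : ℝ :=
  ∑ t ∈ newTimes x n, Real.log (1 / w t (x t))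

/-- Redundancy `R_S^{β⃗}(x_{1:n}) = ln(n^{-n} ∏_{j∈𝒜} n_j^{n_j}) - ln S^{β⃗}(x_{1:n})`. -/
noncomputable def Red (x : ℕ → 𝒳) (w : ℕ → 𝒳 → ℝ) (β : ℕ → ℝ) (n : ℕ) : ℝ :=
  Real.log (((n : ℝ) ^ n)⁻¹ * ∏ j ∈ alph x n, (cnt x j n : ℝ) ^ cnt x j n)
    - Real.log (Sjoint x w β n)

section Helpers

variable {x : ℕ → 𝒳}


lemma mem_alph_iff {i : 𝒳} {t : ℕ} : i ∈ alph x t ↔ 0 < cnt x i t := by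
  simp [alph, cnt, Finset.card_pos, Finset.filter_nonempty_iff, Finset.mem_image]

lemma cnt_succ (i : 𝒳) (t : ℕ) :
    cnt x i (t + 1) = cnt x i t + if x t = i then 1 else 0 := by
  simp only [cnt, Finset.range_add_one, Finset.filter_insert]
  split
  · rw [Finset.card_insert_of_notMem (by simp)]
  · simp

lemma cnt_mono (i : 𝒳) : Monotone (cnt x i) := by
  intro a b hab
  exact Finset.card_le_card (Finset.filter_subset_filter _ (by simpa using hab))

lemma cnt_lt_of_occ {j : 𝒳} {t t' : ℕ} (h : x t = j) (htt' : t < t') :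
    cnt x j t < cnt x j t' := by
  have h1 : cnt x j t + 1 = cnt x j (t + 1) := by rw [cnt_succ]; simp [h]
  have h2 := cnt_mono (x := x) j (show t + 1 ≤ t' from htt')
  omega

/-- Sum over occurrences of `j` of a function of the running count equals
sum over `range (cnt x j n)`. -/
lemma sum_occ (j : 𝒳) (n : ℕ) (g : ℕ → ℝ) :
    ∑ t ∈ (Finset.range n).filter (fun t => x t = j), g (cnt x j t)
      = ∑ k ∈ Finset.range (cnt x j n), g k := by
  set s := (Finset.range n).filter (fun t => x t = j) with hs
  have hinj : Set.InjOn (cnt x j) s := by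
    intro a ha b hb hab
    simp only [hs, Finset.mem_coe, Finset.mem_filter, Finset.mem_range] at ha hb
    by_contra hne
    rcases Nat.lt_or_ge a b with h | h
    · exact absurd hab (Nat.ne_of_lt (cnt_lt_of_occ ha.2 h))
    · have : b < a := by omega
      exact absurd hab.symm (Nat.ne_of_lt (cnt_lt_of_occ hb.2 this))
  have hsub : s.image (cnt x j) ⊆ Finset.range (cnt x j n) := by
    intro k hk
    simp only [Finset.mem_image] at hk
    obtain ⟨t, ht, rfl⟩ := hk
    simp only [hs, Finset.mem_filter, Finset.mem_range] at ht
    exact Finset.mem_range.mpr (cnt_lt_of_occ ht.2 ht.1)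
  have hcard : (s.image (cnt x j)).card = (Finset.range (cnt x j n)).card := by
    rw [Finset.card_image_of_injOn hinj, Finset.card_range]
    simp [hs, cnt]
  have himg : s.image (cnt x j) = Finset.range (cnt x j n) :=
    Finset.eq_of_subset_of_card_le hsub (le_of_eq hcard.symm)
  rw [← himg, Finset.sum_image (fun a ha b hb => hinj ha hb)]

lemma sum_fiber (n : ℕ) (f : ℕ → ℝ) :
    ∑ j ∈ alph x n, ∑ t ∈ (Finset.range n).filter (fun t => x t = j), f t
      = ∑ t ∈ Finset.range n, f t :=
  Finset.sum_fiberwise_of_maps_to (fun t ht => Finset.mem_image_of_mem x ht) f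

lemma card_newTimes (n : ℕ) : (newTimes x n).card = (alph x n).card := by
  have himg : (newTimes x n).image x = alph x n := by
    apply Finset.Subset.antisymm
    · intro j hj
      simp only [Finset.mem_image, newTimes, Finset.mem_filter] at hj
      obtain ⟨t, ⟨ht, _⟩, rfl⟩ := hj
      exact Finset.mem_image_of_mem x ht
    · intro j hj
      simp only [alph, Finset.mem_image, Finset.mem_range] at hj
      obtain ⟨t, ht, rfl⟩ := hj
      have hex : ∃ t', x t' = x t := ⟨t, rfl⟩
      set t0 := Nat.find hex with ht0
      have hxt0 : x t0 = x t := Nat.find_spec hex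
      have ht0le : t0 ≤ t := Nat.find_le rfl
      refine Finset.mem_image.mpr ⟨t0, ?_, hxt0⟩
      simp only [newTimes, Finset.mem_filter, Finset.mem_range]
      refine ⟨lt_of_le_of_lt ht0le ht, ?_⟩
      intro hmem
      simp only [alph, Finset.mem_image, Finset.mem_range] at hmem
      obtain ⟨τ, hτ, hxτ⟩ := hmem
      exact absurd (hxτ.trans hxt0) (Nat.find_min hex hτ)
  have hinj : Set.InjOn x (newTimes x n) := by
    intro a ha b hb hab
    simp only [Finset.mem_coe, newTimes, Finset.mem_filter, Finset.mem_range] at ha hb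
    by_contra hne
    rcases Nat.lt_or_ge a b with h | h
    · exact hb.2 (by rw [← hab]; exact Finset.mem_image_of_mem x (Finset.mem_range.mpr h))
    · have : b < a := by omega
      exact ha.2 (by rw [hab]; exact Finset.mem_image_of_mem x (Finset.mem_range.mpr this))
  rw [← himg, Finset.card_image_of_injOn hinj]

lemma sum_cnt (n : ℕ) : ∑ j ∈ alph x n, cnt x j n = n := by
  have h := Finset.sum_fiberwise_of_maps_to
    (fun t (ht : t ∈ Finset.range n) => Finset.mem_image_of_mem x ht) (fun _ => (1 : ℕ))
  calc ∑ j ∈ alph x n, cnt x j n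
      = ∑ j ∈ alph x n, ∑ t ∈ (Finset.range n).filter (fun t => x t = j), 1 := by
        refine Finset.sum_congr rfl fun j _ => ?_
        rw [cnt, Finset.card_eq_sum_ones]
    _ = ∑ t ∈ Finset.range n, 1 := h
    _ = n := by simp

end Helpers


lemma sum_log_succ (n : ℕ) :
    ∑ t ∈ Finset.range n, Real.log ((t : ℝ) + 1) = Real.log (n ! : ℝ) := by
  induction n with
  | zero => simp
  | succ p ih =>
    rw [Finset.sum_range_succ, ih, Nat.factorial_succ]
    push_cast
    rw [Real.log_mul (by positivity) (by exact_mod_cast Nat.cast_ne_zero.mpr p.factorial_ne_zero)]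
    ring

lemma sum_log_range (p : ℕ) :
    ∑ k ∈ Finset.range (p + 1), Real.log (k : ℝ) = Real.log (p ! : ℝ) := by
  induction p with
  | zero => simp
  | succ q ih =>
    rw [Finset.sum_range_succ, ih, Nat.factorial_succ]
    push_cast
    rw [Real.log_mul (by positivity) (by exact_mod_cast Nat.cast_ne_zero.mpr q.factorial_ne_zero)]
    ring

lemma sqrt_pi_le_stirlingSeq (n : ℕ) : Real.sqrt π ≤ Stirling.stirlingSeq (n + 1) := by
  have h := Stirling.tendsto_stirlingSeq_sqrt_pi.comp (Filter.tendsto_add_atTop_nat (n + 1))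
  refine le_of_tendsto h (Filter.Eventually.of_forall fun k => ?_)
  show Stirling.stirlingSeq (k + (n + 1)) ≤ Stirling.stirlingSeq (n + 1)
  exact Stirling.stirlingSeq'_antitone (Nat.le_add_left n k)

lemma stirlingSeq_le (n : ℕ) : Stirling.stirlingSeq (n + 1) ≤ Real.exp 1 / Real.sqrt 2 := by
  have := Stirling.stirlingSeq'_antitone (Nat.zero_le n)
  simpa [Stirling.stirlingSeq_one] using this

lemma log_factorial_eq (k : ℕ) (hk : 1 ≤ k) :
    Real.log (k ! : ℝ) = Real.log (Stirling.stirlingSeq k)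
      + (1/2) * (Real.log 2 + Real.log k) + k * (Real.log k - 1) := by
  obtain ⟨p, rfl⟩ : ∃ p, k = p + 1 := ⟨k - 1, by omega⟩
  set k := p + 1
  have hsp : 0 < Stirling.stirlingSeq k := Stirling.stirlingSeq'_pos p
  have hkpos : (0 : ℝ) < (k : ℝ) := by exact_mod_cast hk
  have hfac : (k ! : ℝ) = Stirling.stirlingSeq k * (Real.sqrt (2 * k) * ((k : ℝ) / Real.exp 1) ^ k) := by
    rw [Stirling.stirlingSeq]
    have h1 : Real.sqrt (2 * (k:ℝ)) * ((k : ℝ) / Real.exp 1) ^ k ≠ 0 := by positivity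
    field_simp
  rw [hfac, Real.log_mul (ne_of_gt hsp) (by positivity),
    Real.log_mul (by positivity) (by positivity),
    Real.log_sqrt (by positivity), Real.log_mul (by norm_num) (ne_of_gt hkpos),
    Real.log_pow, Real.log_div (ne_of_gt hkpos) (Real.exp_ne_zero 1), Real.log_exp]
  ring

lemma log_sqrt_two_pi : Real.log (Real.sqrt (2 * π)) = (1/2) * (Real.log 2 + Real.log π) := by
  rw [Real.log_sqrt (by positivity), Real.log_mul (by norm_num) (ne_of_gt Real.pi_pos)]
  ring

lemma stirling_lower (k : ℕ) (hk : 1 ≤ k) :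
    (k : ℝ) * Real.log k - k + Real.log (Real.sqrt (2 * π)) ≤ Real.log (k ! : ℝ) := by
  obtain ⟨p, rfl⟩ : ∃ p, k = p + 1 := ⟨k - 1, by omega⟩
  have h1 : Real.log (Real.sqrt π) ≤ Real.log (Stirling.stirlingSeq (p + 1)) :=
    Real.log_le_log (Real.sqrt_pos.mpr Real.pi_pos) (sqrt_pi_le_stirlingSeq p)
  have h2 : Real.log (Real.sqrt π) = (1/2) * Real.log π := by
    rw [Real.log_sqrt (le_of_lt Real.pi_pos)]; ring
  have h3 : (0 : ℝ) ≤ Real.log (p + 1 : ℕ) := by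
    apply Real.log_nonneg; exact_mod_cast Nat.one_le_iff_ne_zero.mpr (by omega)
  have h4 := log_factorial_eq (p + 1) (by omega)
  rw [log_sqrt_two_pi]
  set k := p + 1
  have : Real.log (k ! : ℝ) = Real.log (Stirling.stirlingSeq k)
      + (1/2) * (Real.log 2 + Real.log k) + k * (Real.log k - 1) := h4
  linarith

lemma stirling_upper (k : ℕ) (hk : 1 ≤ k) :
    Real.log (k ! : ℝ) ≤ (k : ℝ) * Real.log k - k + (1/2) * Real.log k + 1 := by
  obtain ⟨p, rfl⟩ : ∃ p, k = p + 1 := ⟨k - 1, by omega⟩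
  have hsp : 0 < Stirling.stirlingSeq (p + 1) := Stirling.stirlingSeq'_pos p
  have h1 : Real.log (Stirling.stirlingSeq (p + 1)) ≤ Real.log (Real.exp 1 / Real.sqrt 2) :=
    Real.log_le_log hsp (stirlingSeq_le p)
  have h2 : Real.log (Real.exp 1 / Real.sqrt 2) = 1 - (1/2) * Real.log 2 := by
    rw [Real.log_div (Real.exp_ne_zero 1) (by positivity), Real.log_exp,
      Real.log_sqrt (by norm_num)]
    ring
  have h4 := log_factorial_eq (p + 1) (by omega)
  set k := p + 1
  have : Real.log (k ! : ℝ) = Real.log (Stirling.stirlingSeq k)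
      + (1/2) * (Real.log 2 + Real.log k) + k * (Real.log k - 1) := h4
  linarith

lemma sum_log_add_beta (n m : ℕ) (hmn : m ≤ n) (β : ℝ) (hβ : 1 ≤ β) :
    (m : ℝ) * Real.log β + Real.log (n ! : ℝ) - Real.log (m ! : ℝ)
      ≤ ∑ t ∈ Finset.range n, Real.log ((t : ℝ) + β) := by
  have hβ0 : (0 : ℝ) < β := by linarith
  rw [← Finset.sum_range_add_sum_Ico _ hmn]
  have h1 : (m : ℝ) * Real.log β ≤ ∑ t ∈ Finset.range m, Real.log ((t : ℝ) + β) := by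
    calc (m : ℝ) * Real.log β = ∑ _t ∈ Finset.range m, Real.log β := by
          rw [Finset.sum_const, Finset.card_range]; ring
    _ ≤ _ := Finset.sum_le_sum fun t _ =>
        Real.log_le_log hβ0 (le_add_of_nonneg_left (Nat.cast_nonneg t))
  have h2 : Real.log (n ! : ℝ) - Real.log (m ! : ℝ)
      ≤ ∑ t ∈ Finset.Ico m n, Real.log ((t : ℝ) + β) := by
    have e1 : ∑ t ∈ Finset.Ico m n, Real.log ((t : ℝ) + 1)
        = Real.log (n ! : ℝ) - Real.log (m ! : ℝ) := by
      rw [← sum_log_succ n, ← sum_log_succ m, ← Finset.sum_range_add_sum_Ico _ hmn]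
      ring
    rw [← e1]
    exact Finset.sum_le_sum fun t _ => Real.log_le_log (by positivity) (by linarith)
  linarith


/-- Eq. (26): lower bound on `R_S^β` for `β ≥ 1`. -/
theorem red_lower_bound_beta_ge_one
    (n : ℕ) (hn : 1 ≤ n) (x : ℕ → 𝒳) (w : ℕ → 𝒳 → ℝ)
    (hw : ∀ t i, 0 < w t i)
    (hwsum : ∀ t, ∑ k ∈ Finset.univ \ alph x t, w t k ≤ 1)
    (β : ℝ) (hβ : 1 ≤ β) :
    Red x w (fun _ => β) n ≥
      CLw x w n - (alph x n).card * Real.log (alph x n).card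
      + ∑ j ∈ alph x n, (1/2) * Real.log (cnt x j n)
      - (alph x n).card * (1 - Real.log (Real.log 2))
      - (1 - Real.log (Real.sqrt (2 * π))) := by
  have hβ0 : (0 : ℝ) < β := by linarith
  have hnR : (0 : ℝ) < (n : ℝ) := by exact_mod_cast hn
  -- positivity of predictions
  have htβ : ∀ t : ℕ, (0 : ℝ) < (t : ℝ) + β := fun t => by
    have := Nat.cast_nonneg (α := ℝ) t; linarith
  have hSpos : ∀ t, 0 < Spred x w (fun _ => β) t (x t) := by
    intro t
    unfold Spred
    dsimp only
    split
    · next h => exact div_pos (by exact_mod_cast h) (htβ t)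
    · exact div_pos (mul_pos hβ0 (hw t _)) (htβ t)
  -- pointwise log formula
  have hlog_pred : ∀ t, Real.log (Spred x w (fun _ => β) t (x t)) =
      (if x t ∉ alph x t then Real.log β + Real.log (w t (x t)) else 0)
      + Real.log (cnt x (x t) t : ℝ) - Real.log ((t : ℝ) + β) := by
    intro t
    unfold Spred
    dsimp only
    by_cases h : 0 < cnt x (x t) t
    · rw [if_pos h, if_neg (not_not_intro (mem_alph_iff.mpr h)),
        Real.log_div (by exact_mod_cast Nat.pos_iff_ne_zero.mp h) (ne_of_gt (htβ t))]
      ring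
    · have h0 : cnt x (x t) t = 0 := by omega
      rw [if_neg h, if_pos (fun hm => h (mem_alph_iff.mp hm)), h0,
        Real.log_div (ne_of_gt (mul_pos hβ0 (hw t _))) (ne_of_gt (htβ t)),
        Real.log_mul (ne_of_gt hβ0) (ne_of_gt (hw t _))]
      simp
  -- log of the joint probability
  have hlogS : Real.log (Sjoint x w (fun _ => β) n) =
      ((alph x n).card : ℝ) * Real.log β - CLw x w n
      + ∑ j ∈ alph x n, (∑ k ∈ Finset.range (cnt x j n), Real.log (k : ℝ))
      - ∑ t ∈ Finset.range n, Real.log ((t : ℝ) + β) := by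
    have hif : (∑ t ∈ Finset.range n,
        if x t ∉ alph x t then Real.log β + Real.log (w t (x t)) else 0)
        = ((alph x n).card : ℝ) * Real.log β - CLw x w n := by
      rw [← Finset.sum_filter]
      have hnt : (Finset.range n).filter (fun t => x t ∉ alph x t) = newTimes x n := rfl
      rw [hnt, Finset.sum_add_distrib, Finset.sum_const, card_newTimes, nsmul_eq_mul]
      have hCL : CLw x w n = -∑ t ∈ newTimes x n, Real.log (w t (x t)) := by
        rw [CLw]
        simp only [one_div, Real.log_inv, Finset.sum_neg_distrib]
      rw [hCL]
      ring
    have hcnt : ∑ t ∈ Finset.range n, Real.log (cnt x (x t) t : ℝ)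
        = ∑ j ∈ alph x n, (∑ k ∈ Finset.range (cnt x j n), Real.log (k : ℝ)) := by
      rw [← sum_fiber (x := x) n (fun t => Real.log (cnt x (x t) t : ℝ))]
      refine Finset.sum_congr rfl fun j _ => ?_
      rw [← sum_occ j n (fun k => Real.log (k : ℝ))]
      refine Finset.sum_congr rfl fun t ht => ?_
      rw [(Finset.mem_filter.mp ht).2]
    rw [Sjoint, Real.log_prod (fun t _ => ne_of_gt (hSpos t)),
      Finset.sum_congr rfl (fun t _ => hlog_pred t), Finset.sum_sub_distrib,
      Finset.sum_add_distrib, hif, hcnt]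
  -- first term of Red
  have hcnt_pos : ∀ j ∈ alph x n, 0 < cnt x j n := fun j hj => mem_alph_iff.mp hj
  have hfirst : Real.log (((n : ℝ) ^ n)⁻¹ * ∏ j ∈ alph x n, (cnt x j n : ℝ) ^ cnt x j n)
      = -((n : ℝ) * Real.log n)
        + ∑ j ∈ alph x n, (cnt x j n : ℝ) * Real.log (cnt x j n) := by
    have hne : ∀ j ∈ alph x n, ((cnt x j n : ℝ)) ^ (cnt x j n) ≠ 0 := fun j hj =>
      pow_ne_zero _ (by exact_mod_cast (hcnt_pos j hj).ne')
    rw [Real.log_mul (inv_ne_zero (pow_ne_zero _ (ne_of_gt hnR)))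
        (Finset.prod_ne_zero_iff.mpr hne),
      Real.log_inv, Real.log_pow, Real.log_prod hne]
    congr 1
    exact Finset.sum_congr rfl fun j _ => by rw [Real.log_pow]
  have hm_le : (alph x n).card ≤ n :=
    le_trans Finset.card_image_le (le_of_eq (Finset.card_range n))
  have hm1 : 1 ≤ (alph x n).card :=
    Finset.card_pos.mpr ⟨x 0, Finset.mem_image_of_mem x (Finset.mem_range.mpr hn)⟩
  have hA := sum_log_add_beta n (alph x n).card hm_le β hβ
  have hB : ∀ j ∈ alph x n, (cnt x j n : ℝ) + (1/2) * Real.log (cnt x j n) - 1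
      ≤ (cnt x j n : ℝ) * Real.log (cnt x j n)
        - ∑ k ∈ Finset.range (cnt x j n), Real.log (k : ℝ) := by
    intro j hj
    obtain ⟨p, hp⟩ : ∃ p, cnt x j n = p + 1 := ⟨cnt x j n - 1, by have := hcnt_pos j hj; omega⟩
    rw [hp]
    have h1 : ∑ k ∈ Finset.range (p + 1), Real.log (k : ℝ) = Real.log (p ! : ℝ) :=
      sum_log_range p
    have h2 : Real.log (((p + 1)! : ℕ) : ℝ) = Real.log ((p : ℝ) + 1) + Real.log (p ! : ℝ) := by
      rw [Nat.factorial_succ]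
      push_cast
      rw [Real.log_mul (by positivity) (by exact_mod_cast p.factorial_ne_zero)]
    have h3 := stirling_upper (p + 1) (by omega)
    push_cast at h3 ⊢
    linarith
  have hBsum : (n : ℝ) + ∑ j ∈ alph x n, (1/2) * Real.log (cnt x j n) - (alph x n).card
      ≤ ∑ j ∈ alph x n, (cnt x j n : ℝ) * Real.log (cnt x j n)
        - ∑ j ∈ alph x n, (∑ k ∈ Finset.range (cnt x j n), Real.log (k : ℝ)) := by
    have e : ∑ j ∈ alph x n, ((cnt x j n : ℝ) + (1/2) * Real.log (cnt x j n) - 1)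
        = (n : ℝ) + ∑ j ∈ alph x n, (1/2) * Real.log (cnt x j n) - (alph x n).card := by
      rw [Finset.sum_sub_distrib, Finset.sum_add_distrib, Finset.sum_const, nsmul_eq_mul,
        mul_one]
      have e2 : ∑ j ∈ alph x n, ((cnt x j n : ℝ)) = (n : ℝ) := by
        exact_mod_cast congrArg (Nat.cast : ℕ → ℝ) (sum_cnt (x := x) n)
      rw [e2]
    calc (n : ℝ) + ∑ j ∈ alph x n, (1/2) * Real.log (cnt x j n) - (alph x n).card
        = ∑ j ∈ alph x n, ((cnt x j n : ℝ) + (1/2) * Real.log (cnt x j n) - 1) := e.symm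
      _ ≤ ∑ j ∈ alph x n, ((cnt x j n : ℝ) * Real.log (cnt x j n)
            - ∑ k ∈ Finset.range (cnt x j n), Real.log (k : ℝ)) := Finset.sum_le_sum hB
      _ = _ := Finset.sum_sub_distrib _ _
  have hC := stirling_lower n hn
  have hD : Real.log ((Nat.factorial (alph x n).card : ℕ) : ℝ)
      ≤ ((alph x n).card : ℝ) * Real.log ((alph x n).card) := by
    have h1 : ((Nat.factorial (alph x n).card : ℕ) : ℝ)
        ≤ ((alph x n).card : ℝ) ^ (alph x n).card := by
      exact_mod_cast Nat.factorial_le_pow _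
    have h2 : (0 : ℝ) < ((Nat.factorial (alph x n).card : ℕ) : ℝ) := by
      exact_mod_cast Nat.factorial_pos _
    calc Real.log _ ≤ Real.log (((alph x n).card : ℝ) ^ (alph x n).card) :=
          Real.log_le_log h2 h1
      _ = _ := by rw [Real.log_pow]
  have hE : ((alph x n).card : ℝ) * Real.log (Real.log 2) ≤ 0 := by
    apply mul_nonpos_of_nonneg_of_nonpos (Nat.cast_nonneg _)
    apply Real.log_nonpos (Real.log_nonneg one_le_two)
    have := Real.log_two_lt_d9
    linarith
  have hlogn : 0 ≤ Real.log n := Real.log_nonneg (by exact_mod_cast hn)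
  rw [ge_iff_le]
  unfold Red
  rw [hfirst, hlogS]
  linarith [hA, hBsum, hC, hD, hE, hlogn]
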